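/- arXiv:2302.00273 — 2 statements merged into one kernel-verified Lean document; each statement's English description precedes it below -/
import Mathlib

section
/- The variable gadget V(x) = {V₁, V₂, V₃, V₄, V₅} with V₁ = V₅ = {1,2,3}, V₂ = V₃ = {1}, V₄ = {3}, and partial order V₁ ≺ V_b for b > 1, V_a ≺ V₅ for a < 5, V₂ ≺ V₃, admits a packing of height 4, and admits no packing of height 3. -/
/-- `SepGates π X X'` means `max π(X) + 1 < min π(X')`:
every position of `π(X)` is more than one below every position of `π(X')`. -/
def SepGates {n : ℕ} (π : Equiv.Perm (Fin n)) (X X' : Finset (Fin n)) : Prop :=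
  ∀ x ∈ X, ∀ y ∈ X', (π x : ℕ) + 1 < (π y : ℕ)

/-- A packing `(π, μ)` of an (indexed) family of gates `G` with strict order `lt`
(`lt i j` meaning gate `i` precedes gate `j`) and height `h`. Levels are `1,…,h`. -/
structure Packing {n : ℕ} (I : Type) (G : I → Finset (Fin n))
    (lt : I → I → Prop) (h : ℕ) where
  π : Equiv.Perm (Fin n)
  μ : I → ℕ
  μ_mem : ∀ i, μ i ∈ Finset.Icc 1 h
  horiz : ∀ i j, i ≠ j → μ i = μ j → SepGates π (G i) (G j) ∨ SepGates π (G j) (G i)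
  vert : ∀ i j, (G i ∩ G j).Nonempty → lt j i → μ j < μ i

/-- The variable gadget: `V₁ = V₅ = {1,2,3}`, `V₂ = V₃ = {1}`, `V₄ = {3}` (0-indexed here). -/
def Vg : Fin 5 → Finset (Fin 3) := ![{0, 1, 2}, {0}, {0}, {2}, {0, 1, 2}]

/-- The strict order of the variable gadget:
`V₁ ≺ V_b` for `b > 1`, `V_a ≺ V₅` for `a < 5`, and `V₂ ≺ V₃`. -/
def Vlt : Fin 5 → Fin 5 → Prop := fun i j =>
  (i = 0 ∧ j ≠ 0) ∨ (j = 4 ∧ i ≠ 4) ∨ (i = 1 ∧ j = 2)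


namespace Packing

variable {n : ℕ} {I : Type} {G : I → Finset (Fin n)} {lt : I → I → Prop} {h : ℕ}

theorem length_add_level_le_height (p : Packing I G lt h) :
    ∀ (a : I) (l : List I),
      (a :: l).IsChain (fun i j => (G i ∩ G j).Nonempty ∧ lt i j) → l.length + p.μ a ≤ h
  | a, [], _ => by simpa using (Finset.mem_Icc.mp (p.μ_mem a)).2
  | a, b :: l, hchain => by
    obtain ⟨⟨hmeet, hab⟩, hrest⟩ := List.isChain_cons_cons.mp hchain
    have hstep : p.μ a < p.μ b := p.vert b a (Finset.inter_comm (G a) (G b) ▸ hmeet) hab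
    have hrest_le := p.length_add_level_le_height b l hrest
    simp only [List.length_cons]
    omega

theorem length_le_height_of_isChain (p : Packing I G lt h) (l : List I)
    (hl : l.IsChain (fun i j => (G i ∩ G j).Nonempty ∧ lt i j)) : l.length ≤ h := by
  cases l with
  | nil => exact Nat.zero_le h
  | cons a l =>
    have hl_le := p.length_add_level_le_height a l hl
    have ha_pos := (Finset.mem_Icc.mp (p.μ_mem a)).1
    simp only [List.length_cons]
    omega

end Packing

def vgPackingOfHeightFour : Packing (Fin 5) Vg Vlt 4 where
  π := 1
  μ := ![1, 2, 3, 2, 4]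
  μ_mem := by decide
  horiz := by unfold SepGates; decide
  vert := by unfold Vlt; decide

theorem stmt_4 :
    Nonempty (Packing (Fin 5) Vg Vlt 4) ∧ ¬ Nonempty (Packing (Fin 5) Vg Vlt 3) := by
  refine ⟨⟨vgPackingOfHeightFour⟩, fun ⟨p⟩ => ?_⟩
  -- V₁ ≺ V₂ ≺ V₃ ≺ V₅ all contain the first variable, so they need four distinct levels.
  exact absurd (p.length_le_height_of_isChain [0, 1, 2, 4] (by unfold Vlt; decide)) (by decide)
end

section
/- In any packing of the variable gadget with height 4, the levels of V₁, V₂, V₃, V₅ are forced: μ(V₁) = 1, μ(V₂) = 2, μ(V₃) = 3, μ(V₅) = 4, and μ(V₄) ∈ {2, 3}; moreover both choices μ(V₄) = 2 and μ(V₄) = 3 are realized by some packing of height 4. -/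
namespace Packing

variable {n h : ℕ} {I : Type} {G : I → Finset (Fin n)} {lt : I → I → Prop}
  (P : Packing I G lt h)

theorem one_le_μ (i : I) : 1 ≤ P.μ i := (Finset.mem_Icc.1 (P.μ_mem i)).1

theorem μ_le_height (i : I) : P.μ i ≤ h := (Finset.mem_Icc.1 (P.μ_mem i)).2

theorem μ_lt_of_mem {i j : I} {x : Fin n} (hi : x ∈ G i) (hj : x ∈ G j) (hij : lt i j) :
    P.μ i < P.μ j :=
  P.vert j i ⟨x, Finset.mem_inter.2 ⟨hj, hi⟩⟩ hij

end Packing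

instance : DecidableRel Vlt := fun i j => by unfold Vlt; infer_instance

/-- With `π` the identity, `V₄ = {3}` is two positions away from `V₂ = V₃ = {1}`, so it may share
a level with either of them. -/
def variableGadgetPacking (m : ℕ) (hm : m = 2 ∨ m = 3) : Packing (Fin 5) Vg Vlt 4 where
  π := Equiv.refl _
  μ := ![1, 2, 3, m, 4]
  μ_mem := by rcases hm with rfl | rfl <;> decide
  horiz := by unfold SepGates; rcases hm with rfl | rfl <;> decide
  vert := by rcases hm with rfl | rfl <;> decide

theorem stmt_5 :
    (∀ P : Packing (Fin 5) Vg Vlt 4,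
      P.μ 0 = 1 ∧ P.μ 1 = 2 ∧ P.μ 2 = 3 ∧ P.μ 4 = 4 ∧ (P.μ 3 = 2 ∨ P.μ 3 = 3)) ∧
    (∃ P : Packing (Fin 5) Vg Vlt 4, P.μ 3 = 2) ∧
    (∃ P : Packing (Fin 5) Vg Vlt 4, P.μ 3 = 3) := by
  refine ⟨fun P => ?_, ⟨variableGadgetPacking 2 (.inl rfl), rfl⟩,
    ⟨variableGadgetPacking 3 (.inr rfl), rfl⟩⟩
  have level_lt {i j : Fin 5} (x : Fin 3) (hi : x ∈ Vg i := by decide) (hj : x ∈ Vg j := by decide)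
      (hij : Vlt i j := by decide) : P.μ i < P.μ j :=
    P.μ_lt_of_mem hi hj hij
  -- `V₁ ≺ V₂ ≺ V₃ ≺ V₅` share position 1, so they fill all four levels; `V₁ ≺ V₄ ≺ V₅` share position 3
  have h12 := level_lt (i := 0) (j := 1) 0
  have h23 := level_lt (i := 1) (j := 2) 0
  have h35 := level_lt (i := 2) (j := 4) 0
  have h14 := level_lt (i := 0) (j := 3) 2
  have h45 := level_lt (i := 3) (j := 4) 2
  have := P.one_le_μ 0
  have := P.μ_le_height 4
  omega
end
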